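/- Let e_0, e_1 ∈ C¹([0,T]×[x_L,x_R]) satisfy the system ∂_t e_0 + ∂_x e_1 = D_1 and ∂_t e_1 + C_1(x) e_0 = D_2, where C_1 is continuous and bounded by M on [x_L,x_R]. Define E(t) = (1/2)∫_{x_L}^{x_R} (e_0(t,x)² + e_1(t,x)²) dx. Then for all t ∈ [0,T], E'(t) ≤ D_3(t) + C(E(t) + ‖∂_x e_0(t,·)‖²_{L²}) + (1/2)‖D_1(t,·)‖²_{L²} + (1/2)‖D_2(t,·)‖²_{L²}, where D_3(t) = |e_0(t,x_L)e_1(t,x_L)| + |e_0(t,x_R)e_1(t,x_R)| and C is a constant depending only on M. -/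

import Mathlib

/-!
Differentiating under the integral and substituting the two equations gives
`E' = ∫ (e₀ D₁ + e₁ D₂ - C₁ e₀ e₁) - ∫ e₀ ∂ₓe₁`; integrating the last term by parts leaves the
boundary flux `e₀ e₁ |_{x_L}^{x_R}` plus `∫ ∂ₓe₀ e₁`, and Young's inequality `pq ≤ (p² + q²)/2`
bounds each remaining product, with `C = 2 + M`.
-/

open MeasureTheory Set intervalIntegral

section PartialDerivatives

variable {E : Type*} [NormedAddCommGroup E] [NormedSpace ℝ E] {f : ℝ → ℝ → E} {t x : ℝ}

lemma hasDerivAt_apply_left (hf : DifferentiableAt ℝ (fun p : ℝ × ℝ => f p.1 p.2) (t, x)) :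
    HasDerivAt (fun s => f s x) (fderiv ℝ (fun p : ℝ × ℝ => f p.1 p.2) (t, x) (1, 0)) t :=
  hf.hasFDerivAt.comp_hasDerivAt (f := fun s => (s, x)) t
    ((hasDerivAt_id t).prodMk (hasDerivAt_const t x))

lemma hasDerivAt_apply_right (hf : DifferentiableAt ℝ (fun p : ℝ × ℝ => f p.1 p.2) (t, x)) :
    HasDerivAt (fun y => f t y) (fderiv ℝ (fun p : ℝ × ℝ => f p.1 p.2) (t, x) (0, 1)) x :=
  hf.hasFDerivAt.comp_hasDerivAt (f := fun y => (t, y)) x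
    ((hasDerivAt_const x t).prodMk (hasDerivAt_id x))

lemma continuous_deriv_apply_left (hf : ContDiff ℝ 1 (fun p : ℝ × ℝ => f p.1 p.2)) :
    Continuous fun p : ℝ × ℝ => deriv (fun s => f s p.2) p.1 := by
  have hdf := hf.differentiable one_ne_zero
  simp_rw [fun p : ℝ × ℝ => (hasDerivAt_apply_left (hdf (p.1, p.2))).deriv]
  exact (hf.continuous_fderiv one_ne_zero).clm_apply continuous_const

lemma hasDerivAt_deriv_apply_left (hf : Differentiable ℝ (fun p : ℝ × ℝ => f p.1 p.2))
    (t x : ℝ) : HasDerivAt (fun s => f s x) (deriv (fun s => f s x) t) t :=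
  (hasDerivAt_apply_left (hf (t, x))).differentiableAt.hasDerivAt

lemma hasDerivAt_deriv_apply_right (hf : Differentiable ℝ (fun p : ℝ × ℝ => f p.1 p.2))
    (t x : ℝ) : HasDerivAt (f t) (deriv (f t) x) x :=
  (hasDerivAt_apply_right (hf (t, x))).differentiableAt.hasDerivAt

lemma continuous_deriv_apply_right (hf : ContDiff ℝ 1 (fun p : ℝ × ℝ => f p.1 p.2)) (t : ℝ) :
    Continuous (deriv (f t)) := by
  have hdf := hf.differentiable one_ne_zero
  have hjoint : Continuous fun p : ℝ × ℝ => deriv (f p.1) p.2 := by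
    simp_rw [fun p : ℝ × ℝ => (hasDerivAt_apply_right (hdf (p.1, p.2))).deriv]
    exact (hf.continuous_fderiv one_ne_zero).clm_apply continuous_const
  exact hjoint.comp (Continuous.prodMk_right t)

lemma hasDerivAt_intervalIntegral_of_contDiff [CompleteSpace E]
    (hf : ContDiff ℝ 1 (fun p : ℝ × ℝ => f p.1 p.2)) (a b t : ℝ) :
    HasDerivAt (fun s => ∫ x in a..b, f s x) (∫ x in a..b, deriv (fun s => f s x) t) t := by
  have hf' := continuous_deriv_apply_left hf
  obtain ⟨C, hC⟩ := ((isCompact_closedBall t 1).prod isCompact_uIcc).exists_bound_of_continuousOn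
    hf'.continuousOn
  have hslice : ∀ s, Continuous (f s) := fun s => hf.continuous.comp (Continuous.prodMk_right s)
  refine (hasDerivAt_integral_of_dominated_loc_of_deriv_le (bound := fun _ => C)
    (F' := fun s x => deriv (fun s => f s x) s) (Metric.closedBall_mem_nhds t one_pos)
    (.of_forall fun s => (hslice s).aestronglyMeasurable) ((hslice t).intervalIntegrable a b)
    (hf'.comp (Continuous.prodMk_right t)).aestronglyMeasurable
    (ae_of_all _ fun x hx s hs => hC (s, x) ⟨hs, uIoc_subset_uIcc hx⟩) intervalIntegrable_const
    (ae_of_all _ fun x _ s _ => hasDerivAt_deriv_apply_left (hf.differentiable one_ne_zero) s x)).2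

end PartialDerivatives

lemma hasDerivAt_half_integral_sq_add_sq {f g : ℝ → ℝ → ℝ}
    (hf : ContDiff ℝ 1 (fun p : ℝ × ℝ => f p.1 p.2))
    (hg : ContDiff ℝ 1 (fun p : ℝ × ℝ => g p.1 p.2)) (a b t : ℝ) :
    HasDerivAt (fun s => (1 / 2) * ∫ x in a..b, (f s x ^ 2 + g s x ^ 2))
      (∫ x in a..b, (f t x * deriv (fun s => f s x) t + g t x * deriv (fun s => g s x) t)) t := by
  refine ((hasDerivAt_intervalIntegral_of_contDiff (f := fun s x => f s x ^ 2 + g s x ^ 2)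
    ((hf.pow 2).add (hg.pow 2)) a b t).const_mul (1 / 2 : ℝ)).congr_deriv ?_
  rw [← intervalIntegral.integral_const_mul]
  refine integral_congr fun x _ => ?_
  have hdf := hasDerivAt_deriv_apply_left (hf.differentiable one_ne_zero) t x
  have hdg := hasDerivAt_deriv_apply_left (hg.differentiable one_ne_zero) t x
  rw [show deriv (fun s => f s x ^ 2 + g s x ^ 2) t = _ from ((hdf.pow 2).add (hdg.pow 2)).deriv]
  ring

section EnergyRate

variable {u v u' v' uₜ vₜ d₁ d₂ c : ℝ → ℝ} {a b M : ℝ}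

lemma integral_energy_rate_eq (hu : ∀ x, HasDerivAt u (u' x) x) (hv : ∀ x, HasDerivAt v (v' x) x)
    (hu' : Continuous u') (hv' : Continuous v') (hd₁ : Continuous d₁) (hd₂ : Continuous d₂)
    (hc : Continuous c) (hab : a ≤ b)
    (h₁ : ∀ x ∈ Icc a b, uₜ x + v' x = d₁ x) (h₂ : ∀ x ∈ Icc a b, vₜ x + c x * u x = d₂ x) :
    ∫ x in a..b, (u x * uₜ x + v x * vₜ x) =
      (∫ x in a..b, (u x * d₁ x + v x * d₂ x - c x * (u x * v x) + u' x * v x))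
        - (u b * v b - u a * v a) := by
  have hu_cont : Continuous u := continuous_iff_continuousAt.2 fun x => (hu x).continuousAt
  have hv_cont : Continuous v := continuous_iff_continuousAt.2 fun x => (hv x).continuousAt
  have hsource := (by fun_prop : Continuous fun x =>
    u x * d₁ x + v x * d₂ x - c x * (u x * v x)).intervalIntegrable (μ := volume) a b
  calc ∫ x in a..b, (u x * uₜ x + v x * vₜ x)
      = ∫ x in a..b, ((u x * d₁ x + v x * d₂ x - c x * (u x * v x)) - u x * v' x) := by
        refine integral_congr fun x hx => ?_
        rw [uIcc_of_le hab] at hx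
        linear_combination u x * h₁ x hx + v x * h₂ x hx
    _ = (∫ x in a..b, (u x * d₁ x + v x * d₂ x - c x * (u x * v x)))
          - (u b * v b - u a * v a - ∫ x in a..b, u' x * v x) := by
        rw [integral_sub hsource
            ((by fun_prop : Continuous fun x => u x * v' x).intervalIntegrable a b),
          integral_mul_deriv_eq_deriv_mul (fun x _ => hu x) (fun x _ => hv x)
            (hu'.intervalIntegrable a b) (hv'.intervalIntegrable a b)]
    _ = _ := by
        rw [integral_add hsource
          ((by fun_prop : Continuous fun x => u' x * v x).intervalIntegrable a b)]
        ring

lemma energy_integrand_le {u v d₁ d₂ c u' M : ℝ} (hc : |c| ≤ M) :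
    u * d₁ + v * d₂ - c * (u * v) + u' * v ≤
      (1 + M / 2) * (u ^ 2 + v ^ 2) + 1 / 2 * d₁ ^ 2 + 1 / 2 * d₂ ^ 2 + 1 / 2 * u' ^ 2 := by
  obtain ⟨hcl, hcu⟩ := abs_le.mp hc
  -- Young's inequality for each product; `(M ∓ c)(u ± v)² ≥ 0` gives `-c u v ≤ M (u² + v²) / 2`.
  nlinarith [sq_nonneg (u - d₁), sq_nonneg (v - d₂), sq_nonneg (u' - v),
    mul_nonneg (sub_nonneg.2 hcu) (sq_nonneg (u + v)),
    mul_nonneg (neg_le_iff_add_nonneg.1 hcl) (sq_nonneg (u - v))]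

lemma integral_energy_integrand_le (hu : Continuous u) (hv : Continuous v) (hu' : Continuous u')
    (hd₁ : Continuous d₁) (hd₂ : Continuous d₂) (hc : Continuous c) (hab : a ≤ b)
    (hcM : ∀ x ∈ Icc a b, |c x| ≤ M) :
    ∫ x in a..b, (u x * d₁ x + v x * d₂ x - c x * (u x * v x) + u' x * v x) ≤
      (1 + M / 2) * (∫ x in a..b, (u x ^ 2 + v x ^ 2)) + 1 / 2 * (∫ x in a..b, d₁ x ^ 2)
        + 1 / 2 * (∫ x in a..b, d₂ x ^ 2) + 1 / 2 * ∫ x in a..b, u' x ^ 2 := by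
  have i₀ := (by fun_prop : Continuous fun x => (1 + M / 2) * (u x ^ 2 + v x ^ 2)
    ).intervalIntegrable (μ := volume) a b
  have i₁ := (by fun_prop : Continuous fun x => 1 / 2 * d₁ x ^ 2).intervalIntegrable
    (μ := volume) a b
  have i₂ := (by fun_prop : Continuous fun x => 1 / 2 * d₂ x ^ 2).intervalIntegrable
    (μ := volume) a b
  have i₃ := (by fun_prop : Continuous fun x => 1 / 2 * u' x ^ 2).intervalIntegrable
    (μ := volume) a b
  simp only [← intervalIntegral.integral_const_mul]
  rw [← integral_add i₀ i₁, ← integral_add (i₀.add i₁) i₂, ← integral_add ((i₀.add i₁).add i₂) i₃]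
  refine integral_mono_on hab ?_ (((i₀.add i₁).add i₂).add i₃)
    fun x hx => energy_integrand_le (hcM x hx)
  exact (by fun_prop : Continuous fun x =>
    u x * d₁ x + v x * d₂ x - c x * (u x * v x) + u' x * v x).intervalIntegrable a b

end EnergyRate

theorem stmt_9_general (T xL xR M : ℝ) (hx : xL ≤ xR) (hM : 0 ≤ M)
    (e0 e1 D1 D2 : ℝ → ℝ → ℝ) (C1 : ℝ → ℝ)
    (he0 : ContDiff ℝ 1 (fun p : ℝ × ℝ => e0 p.1 p.2))
    (he1 : ContDiff ℝ 1 (fun p : ℝ × ℝ => e1 p.1 p.2))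
    (hD1 : Continuous (fun p : ℝ × ℝ => D1 p.1 p.2))
    (hD2 : Continuous (fun p : ℝ × ℝ => D2 p.1 p.2))
    (hC1 : Continuous C1) (hC1bound : ∀ x ∈ Set.Icc xL xR, |C1 x| ≤ M)
    (heq1 : ∀ t ∈ Set.Icc 0 T, ∀ x ∈ Set.Icc xL xR,
      deriv (fun s => e0 s x) t + deriv (fun y => e1 t y) x = D1 t x)
    (heq2 : ∀ t ∈ Set.Icc 0 T, ∀ x ∈ Set.Icc xL xR,
      deriv (fun s => e1 s x) t + C1 x * e0 t x = D2 t x)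
    (E D3 : ℝ → ℝ)
    (hE : ∀ t, E t = (1 / 2) * ∫ x in xL..xR, (e0 t x ^ 2 + e1 t x ^ 2))
    (hD3 : ∀ t, D3 t = |e0 t xL * e1 t xL| + |e0 t xR * e1 t xR|) :
    ∃ C : ℝ, ∀ t ∈ Set.Icc 0 T,
      deriv E t ≤ D3 t + C * (E t + ∫ x in xL..xR, (deriv (fun y => e0 t y) x) ^ 2)
        + (1 / 2) * (∫ x in xL..xR, D1 t x ^ 2)
        + (1 / 2) * (∫ x in xL..xR, D2 t x ^ 2) := by
  have hd0 := he0.differentiable one_ne_zero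
  have hd1 := he1.differentiable one_ne_zero
  refine ⟨2 + M, fun t ht => ?_⟩
  have hEt : deriv E t = ∫ x in xL..xR,
      (e0 t x * deriv (fun s => e0 s x) t + e1 t x * deriv (fun s => e1 s x) t) := by
    rw [show E = _ from funext hE]
    exact (hasDerivAt_half_integral_sq_add_sq he0 he1 xL xR t).deriv
  have hslice : ∀ {f : ℝ → ℝ → ℝ}, Continuous (fun p : ℝ × ℝ => f p.1 p.2) →
      Continuous (f t) := fun hf => hf.comp (Continuous.prodMk_right t)
  have hrate := integral_energy_rate_eq (hasDerivAt_deriv_apply_right hd0 t)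
    (hasDerivAt_deriv_apply_right hd1 t) (continuous_deriv_apply_right he0 t)
    (continuous_deriv_apply_right he1 t) (hslice hD1) (hslice hD2) hC1 hx (heq1 t ht) (heq2 t ht)
  have hyoung := integral_energy_integrand_le (hslice he0.continuous) (hslice he1.continuous)
    (continuous_deriv_apply_right he0 t) (hslice hD1) (hslice hD2) hC1 hx hC1bound
  have hgrad : 0 ≤ ∫ x in xL..xR, (deriv (fun y => e0 t y) x) ^ 2 :=
    integral_nonneg hx fun _ _ => sq_nonneg _
  rw [hEt, hrate, hD3, hE]
  nlinarith [le_abs_self (e0 t xL * e1 t xL), neg_abs_le (e0 t xR * e1 t xR), mul_nonneg hM hgrad]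

/-- Energy estimate for the error system: if (e₀, e₁) solve
∂ₜe₀ + ∂ₓe₁ = D₁ and ∂ₜe₁ + C₁(x)e₀ = D₂ with |C₁| ≤ M, then the energy
E(t) = ½∫(e₀² + e₁²) satisfies the differential inequality
E'(t) ≤ D₃(t) + C(E(t) + ‖∂ₓe₀(t,·)‖²) + ½‖D₁(t,·)‖² + ½‖D₂(t,·)‖²
for a constant C depending only on M. -/
theorem stmt_9 (T xL xR M : ℝ) (hT : 0 < T) (hx : xL ≤ xR) (hM : 0 ≤ M)
    (e0 e1 D1 D2 : ℝ → ℝ → ℝ) (C1 : ℝ → ℝ)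
    (he0 : ContDiff ℝ 1 (fun p : ℝ × ℝ => e0 p.1 p.2))
    (he1 : ContDiff ℝ 1 (fun p : ℝ × ℝ => e1 p.1 p.2))
    (hD1 : Continuous (fun p : ℝ × ℝ => D1 p.1 p.2))
    (hD2 : Continuous (fun p : ℝ × ℝ => D2 p.1 p.2))
    (hC1 : Continuous C1) (hC1bound : ∀ x ∈ Set.Icc xL xR, |C1 x| ≤ M)
    (heq1 : ∀ t ∈ Set.Icc 0 T, ∀ x ∈ Set.Icc xL xR,
      deriv (fun s => e0 s x) t + deriv (fun y => e1 t y) x = D1 t x)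
    (heq2 : ∀ t ∈ Set.Icc 0 T, ∀ x ∈ Set.Icc xL xR,
      deriv (fun s => e1 s x) t + C1 x * e0 t x = D2 t x)
    (E D3 : ℝ → ℝ)
    (hE : ∀ t, E t = (1 / 2) * ∫ x in xL..xR, (e0 t x ^ 2 + e1 t x ^ 2))
    (hD3 : ∀ t, D3 t = |e0 t xL * e1 t xL| + |e0 t xR * e1 t xR|) :
    ∃ C : ℝ, ∀ t ∈ Set.Icc 0 T,
      deriv E t ≤ D3 t + C * (E t + ∫ x in xL..xR, (deriv (fun y => e0 t y) x) ^ 2)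
        + (1 / 2) * (∫ x in xL..xR, D1 t x ^ 2)
        + (1 / 2) * (∫ x in xL..xR, D2 t x ^ 2) :=
  stmt_9_general T xL xR M hx hM e0 e1 D1 D2 C1 he0 he1 hD1 hD2 hC1 hC1bound heq1 heq2 E D3 hE hD3
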